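/- Let Δ̃ be a graph without isolated vertices, ℓ : D(Δ̃) → N a voltage assignment, and Γ̃ the lift of Δ̃ with respect to ℓ. Define v ∼ w iff v and w have the same neighbour sets. Then the following are equivalent: (i) for all vertices u, v, w of Δ̃ with u ∼ v and v ⊥ w, one has ℓ(w,u) = ℓ(w,v); (ii) for all vertices (u,m), (v,n) of Γ̃, one has (u,m) ∼ (v,n) in Γ̃ if and only if m = n and u ∼ v in Δ̃. -/

import Mathlib

/-!
A neighbour `(w, k)` of `(u, m)` in the lift is determined by `w`, namely `k = (ℓ u w)⁻¹ * m`.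
Hence if `(u, m)` and `(v, n)` have the same neighbours, then `u ∼ v` and, for every common
neighbour `w`, `ℓ v w = n * m⁻¹ * ℓ u w`. Condition (i) says exactly that `ℓ u w = ℓ v w`
here, so one neighbour `w` of `u` forces `m = n`; conversely, taking `m = n = 1` recovers (i)
from (ii).
-/

/-- The lift of a graph `Δ` with respect to a voltage assignment `ℓ : D(Δ) → N`. -/
def liftGraph {V N : Type*} [Group N] (Δ : SimpleGraph V) (ℓ : V → V → N)
    (hℓ : ∀ u v, Δ.Adj u v → ℓ u v = (ℓ v u)⁻¹) : SimpleGraph (V × N) where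
  Adj p q := Δ.Adj p.1 q.1 ∧ ℓ p.1 q.1 = p.2 * q.2⁻¹
  symm := ⟨by
    rintro ⟨u, m⟩ ⟨v, n⟩ ⟨h1, h2⟩
    exact ⟨h1.symm, by rw [hℓ v u h1.symm, h2]; group⟩⟩
  loopless := ⟨by rintro ⟨u, m⟩ ⟨h, -⟩; exact Δ.irrefl h⟩

theorem SimpleGraph.adj_iff_adj_of_neighborSet_eq {V : Type*} {G : SimpleGraph V} {u v : V}
    (h : G.neighborSet u = G.neighborSet v) (w : V) : G.Adj u w ↔ G.Adj v w :=
  Set.ext_iff.1 h w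

namespace liftGraph

variable {V N : Type*} [Group N] {Δ : SimpleGraph V} {ℓ : V → V → N}
  {hℓ : ∀ u v, Δ.Adj u v → ℓ u v = (ℓ v u)⁻¹}

@[simp]
theorem adj_iff {u w : V} {m k : N} :
    (liftGraph Δ ℓ hℓ).Adj (u, m) (w, k) ↔ Δ.Adj u w ∧ ℓ u w = m * k⁻¹ :=
  Iff.rfl

theorem lift_mem_neighborSet {u w : V} (hw : Δ.Adj u w) (m : N) :
    (w, (ℓ u w)⁻¹ * m) ∈ (liftGraph Δ ℓ hℓ).neighborSet (u, m) :=
  ⟨hw, by group⟩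

theorem neighborSet_eq_of_neighborSet_eq {u v : V} {m n : N}
    (h : (liftGraph Δ ℓ hℓ).neighborSet (u, m) = (liftGraph Δ ℓ hℓ).neighborSet (v, n)) :
    Δ.neighborSet u = Δ.neighborSet v := by
  ext w
  exact ⟨fun hw => (h ▸ lift_mem_neighborSet hw m).1,
    fun hw => (h.symm ▸ lift_mem_neighborSet hw n).1⟩

theorem voltage_eq_of_neighborSet_eq {u v w : V} {m n : N}
    (h : (liftGraph Δ ℓ hℓ).neighborSet (u, m) = (liftGraph Δ ℓ hℓ).neighborSet (v, n))
    (hw : Δ.Adj u w) : ℓ v w = n * m⁻¹ * ℓ u w := by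
  have hmem : (w, (ℓ u w)⁻¹ * m) ∈ (liftGraph Δ ℓ hℓ).neighborSet (v, n) :=
    h ▸ lift_mem_neighborSet hw m
  rw [hmem.2]
  group

theorem neighborSet_eq_of_voltage_eq {u v : V} (hs : Δ.neighborSet u = Δ.neighborSet v)
    (hvolt : ∀ w, Δ.Adj v w → ℓ u w = ℓ v w) (m : N) :
    (liftGraph Δ ℓ hℓ).neighborSet (u, m) = (liftGraph Δ ℓ hℓ).neighborSet (v, m) := by
  ext ⟨w, k⟩
  simp only [SimpleGraph.mem_neighborSet, adj_iff]
  constructor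
  · rintro ⟨hu, hk⟩
    have hv : Δ.Adj v w := (SimpleGraph.adj_iff_adj_of_neighborSet_eq hs w).1 hu
    exact ⟨hv, hvolt w hv ▸ hk⟩
  · rintro ⟨hv, hk⟩
    exact ⟨(SimpleGraph.adj_iff_adj_of_neighborSet_eq hs w).2 hv, hvolt w hv ▸ hk⟩

end liftGraph

theorem voltage_swap_eq_iff {V N : Type*} [Group N] {Δ : SimpleGraph V} {ℓ : V → V → N}
    (hℓ : ∀ u v, Δ.Adj u v → ℓ u v = (ℓ v u)⁻¹) {u v w : V} (hu : Δ.Adj u w)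
    (hv : Δ.Adj v w) : ℓ w u = ℓ w v ↔ ℓ u w = ℓ v w := by
  rw [hℓ u w hu, hℓ v w hv, inv_inj]

/-- for a graph without isolated vertices, the voltage assignment is compatible
with the "same neighbourhood" relation `∼` downstairs iff `∼` upstairs is exactly
"same first coordinate up to `∼`, equal second coordinate". -/
theorem reductive_iff {V N : Type*} [Group N] (Δ : SimpleGraph V)
    (ℓ : V → V → N) (hℓ : ∀ u v, Δ.Adj u v → ℓ u v = (ℓ v u)⁻¹)
    (hiso : ∀ v : V, ∃ w, Δ.Adj v w) :
    (∀ u v w : V, Δ.neighborSet u = Δ.neighborSet v → Δ.Adj v w → ℓ w u = ℓ w v)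
    ↔ (∀ (u v : V) (m n : N),
        ((liftGraph Δ ℓ hℓ).neighborSet (u, m) = (liftGraph Δ ℓ hℓ).neighborSet (v, n)
          ↔ m = n ∧ Δ.neighborSet u = Δ.neighborSet v)) := by
  open SimpleGraph liftGraph in
  constructor
  · intro h u v m n
    have hvolt : ∀ {u v}, Δ.neighborSet u = Δ.neighborSet v →
        ∀ w, Δ.Adj v w → ℓ u w = ℓ v w :=
      fun hs w hv =>
        (voltage_swap_eq_iff hℓ ((adj_iff_adj_of_neighborSet_eq hs w).2 hv) hv).1 (h _ _ w hs hv)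
    constructor
    · intro hN
      have hs := neighborSet_eq_of_neighborSet_eq hN
      obtain ⟨w, hu⟩ := hiso u
      have hvw := voltage_eq_of_neighborSet_eq hN hu
      rw [hvolt hs w ((adj_iff_adj_of_neighborSet_eq hs w).1 hu), right_eq_mul,
        mul_inv_eq_one] at hvw
      exact ⟨hvw.symm, hs⟩
    · rintro ⟨rfl, hs⟩
      exact neighborSet_eq_of_voltage_eq hs (hvolt hs) m
  · intro h u v w hs hv
    have hN := ((h u v 1 1).2 ⟨rfl, hs⟩).symm
    have hu : Δ.Adj u w :=
      (adj_iff_adj_of_neighborSet_eq (neighborSet_eq_of_neighborSet_eq hN) w).1 hv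
    rw [voltage_swap_eq_iff hℓ hu hv, voltage_eq_of_neighborSet_eq hN hv]
    group
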